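/- (Convergence under disagreement-scaled temperature.) Fix κ > 0 and α_min > 0, and let Q* : S × A → ℝ be a fixed point of the Bellman optimality operator, T Q* = Q*. Let Q_{t+1}^{(i)} = T_{α_t} Q_t^{(i)} for i ∈ {1,2} be coupled iterates driven by the shared disagreement-scaled temperature α_t(s) = max{α_min, (max_{a∈A} |Q_t^{(1)}(s,a) − Q_t^{(2)}(s,a)|)/κ}, and let Δ_0 = ‖Q_0^{(1)} − Q_0^{(2)}‖∞. Then for each i ∈ {1,2} and all t ≥ 0, ‖Q_t^{(i)} − Q*‖∞ ≤ γ^t · ‖Q_0^{(i)} − Q*‖∞ + (γ·α_min·log|A|/(1−γ)) · (1 − γ^t) + (Δ_0·log|A|/κ) · t · γ^t. -/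

import Mathlib

/-!
Whatever the temperature, the soft Bellman operator is a `γ`-contraction in the sup norm, because
the soft maximum `α log ∑ exp(q/α)` is monotone and commutes with adding constants. Since both
iterates are driven by the same temperature, their disagreement therefore decays like
`Δ_t ≤ γ^t Δ_0`, so that `α_t ≤ α_min + γ^t Δ_0 / κ`. On the other hand the soft maximum lies
between `max q` and `max q + α log |A|`, so `T_α` differs from `T` by at most
`γ · max α · log |A|`. Comparing with `Q* = T Q*` gives the error recursion
`e_{t+1} ≤ γ e_t + γ α_min log |A| + γ^{t+1} Δ_0 log |A| / κ`, which unrolls to the bound.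
-/

open Finset Real

/-- The soft Bellman operator at temperature function `α`:
`(T_α Q)(s,a) = r(s,a) + γ·∑_{s'} P(s'|s,a)·α(s')·log(∑_{a'} exp(Q(s',a')/α(s')))`. -/
noncomputable def softBellman {S A : Type*} [Fintype S] [Fintype A]
    (r : S → A → ℝ) (γ : ℝ) (P : S → A → S → ℝ) (α : S → ℝ)
    (Q : S → A → ℝ) (s : S) (a : A) : ℝ :=
  r s a + γ * ∑ s', P s a s' * (α s' * Real.log (∑ a', Real.exp (Q s' a' / α s')))

/-- The Bellman optimality operator:
`(T Q)(s,a) = r(s,a) + γ·∑_{s'} P(s'|s,a)·max_{a'} Q(s',a')`. -/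
noncomputable def hardBellman {S A : Type*} [Fintype S] [Fintype A] [Nonempty A]
    (r : S → A → ℝ) (γ : ℝ) (P : S → A → S → ℝ)
    (Q : S → A → ℝ) (s : S) (a : A) : ℝ :=
  r s a + γ * ∑ s', P s a s' * Finset.univ.sup' Finset.univ_nonempty (Q s')

/-- Sup norm on `S × A → ℝ`: `‖F‖∞ = max_{(s,a)} |F(s,a)|`. -/
noncomputable def supNorm {S A : Type*} [Fintype S] [Fintype A] [Nonempty S] [Nonempty A]
    (Q : S → A → ℝ) : ℝ :=
  Finset.univ.sup' Finset.univ_nonempty (fun p : S × A => |Q p.1 p.2|)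

section SoftMax

variable {A : Type*} [Fintype A] [Nonempty A]

noncomputable def softMax (α : ℝ) (q : A → ℝ) : ℝ :=
  α * log (∑ a, exp (q a / α))

theorem softMax_const {α : ℝ} (hα : α ≠ 0) (c : ℝ) :
    softMax α (fun _ : A => c) = c + α * log (Fintype.card A) := by
  have hcard : (Fintype.card A : ℝ) ≠ 0 := Nat.cast_ne_zero.2 Fintype.card_ne_zero
  rw [softMax, sum_const, card_univ, nsmul_eq_mul, log_mul hcard (exp_ne_zero _), log_exp]
  field_simp
  ring

theorem softMax_le_softMax_add {α : ℝ} (hα : 0 < α) {q q' : A → ℝ} {M : ℝ}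
    (h : ∀ a, q a ≤ q' a + M) : softMax α q ≤ softMax α q' + M := by
  have hsum : ∑ a, exp (q a / α) ≤ (∑ a, exp (q' a / α)) * exp (M / α) := by
    rw [sum_mul]
    refine sum_le_sum fun a _ => ?_
    rw [← exp_add, ← add_div]
    gcongr
    exact h a
  calc softMax α q ≤ α * log ((∑ a, exp (q' a / α)) * exp (M / α)) := by
        unfold softMax
        gcongr
    _ = softMax α q' + M := by
        rw [log_mul (sum_pos (fun a _ => exp_pos _) univ_nonempty).ne' (exp_ne_zero _), log_exp,
          softMax]
        field_simp

theorem abs_softMax_sub_softMax_le {α : ℝ} (hα : 0 < α) {q q' : A → ℝ} {D : ℝ}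
    (h : ∀ a, |q a - q' a| ≤ D) : |softMax α q - softMax α q'| ≤ D := by
  have h₁ := softMax_le_softMax_add hα fun a => sub_le_iff_le_add'.1 (abs_sub_le_iff.1 (h a)).1
  have h₂ := softMax_le_softMax_add hα fun a => sub_le_iff_le_add'.1 (abs_sub_le_iff.1 (h a)).2
  rw [abs_sub_le_iff]
  constructor <;> linarith

theorem sup'_le_softMax {α : ℝ} (hα : 0 < α) (q : A → ℝ) :
    univ.sup' univ_nonempty q ≤ softMax α q := by
  obtain ⟨a, -, ha⟩ := exists_mem_eq_sup' univ_nonempty q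
  rw [ha, softMax, ← div_le_iff₀' hα, ← log_exp (q a / α)]
  exact log_le_log (exp_pos _) (single_le_sum (fun b _ => (exp_pos (q b / α)).le) (mem_univ a))

theorem softMax_le_sup'_add {α : ℝ} (hα : 0 < α) (q : A → ℝ) :
    softMax α q ≤ univ.sup' univ_nonempty q + α * log (Fintype.card A) := by
  calc softMax α q ≤ softMax α (fun _ => univ.sup' univ_nonempty q) + 0 :=
        softMax_le_softMax_add hα fun a => by rw [add_zero]; exact le_sup' q (mem_univ a)
    _ = _ := by rw [add_zero, softMax_const hα.ne']

theorem sup'_le_sup'_add {q q' : A → ℝ} {M : ℝ} (h : ∀ a, q a ≤ q' a + M) :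
    univ.sup' univ_nonempty q ≤ univ.sup' univ_nonempty q' + M := by
  rw [sup'_add]
  exact sup'_mono_fun fun a _ => h a

theorem abs_softMax_sub_sup'_le {α : ℝ} (hα : 0 < α) {q q' : A → ℝ} {D : ℝ}
    (h : ∀ a, |q a - q' a| ≤ D) :
    |softMax α q - univ.sup' univ_nonempty q'| ≤ D + α * log (Fintype.card A) := by
  have h₁ := sup'_le_sup'_add fun a => sub_le_iff_le_add'.1 (abs_sub_le_iff.1 (h a)).1
  have h₂ := sup'_le_sup'_add fun a => sub_le_iff_le_add'.1 (abs_sub_le_iff.1 (h a)).2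
  have h₃ := sup'_le_softMax hα q
  have h₄ := softMax_le_sup'_add hα q
  rw [abs_sub_le_iff]
  constructor <;> linarith

end SoftMax

theorem abs_sum_mul_sub_sum_mul_le {S : Type*} [Fintype S] {p : S → ℝ} (hp : ∀ s, 0 ≤ p s)
    (hp1 : ∑ s, p s = 1) {f g : S → ℝ} {C : ℝ} (h : ∀ s, |f s - g s| ≤ C) :
    |∑ s, p s * f s - ∑ s, p s * g s| ≤ C :=
  calc |∑ s, p s * f s - ∑ s, p s * g s| = |∑ s, p s * (f s - g s)| := by
        simp only [mul_sub, sum_sub_distrib]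
    _ ≤ ∑ s, |p s * (f s - g s)| := abs_sum_le_sum_abs _ _
    _ = ∑ s, p s * |f s - g s| := by simp only [abs_mul, abs_of_nonneg (hp _)]
    _ ≤ ∑ s, p s * C := sum_le_sum fun s _ => mul_le_mul_of_nonneg_left (h s) (hp s)
    _ = C := by rw [← sum_mul, hp1, one_mul]

section SupNorm

variable {S A : Type*} [Fintype S] [Fintype A] [Nonempty S] [Nonempty A]

theorem abs_le_supNorm (F : S → A → ℝ) (s : S) (a : A) : |F s a| ≤ supNorm F :=
  le_sup' (fun p : S × A => |F p.1 p.2|) (mem_univ (s, a))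

theorem supNorm_le {F : S → A → ℝ} {c : ℝ} (h : ∀ s a, |F s a| ≤ c) : supNorm F ≤ c :=
  sup'_le _ _ fun p _ => h p.1 p.2

theorem supNorm_nonneg (F : S → A → ℝ) : 0 ≤ supNorm F :=
  (abs_nonneg _).trans (abs_le_supNorm F (Classical.arbitrary S) (Classical.arbitrary A))

theorem sup'_abs_le_supNorm (F : S → A → ℝ) (s : S) :
    univ.sup' univ_nonempty (fun a => |F s a|) ≤ supNorm F :=
  sup'_le _ _ fun a _ => abs_le_supNorm F s a

end SupNorm

section Bellman

variable {S A : Type*} [Fintype S] [Fintype A] {r : S → A → ℝ} {γ : ℝ} {P : S → A → S → ℝ}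

noncomputable def backup (r : S → A → ℝ) (γ : ℝ) (P : S → A → S → ℝ) (V : S → ℝ)
    (s : S) (a : A) : ℝ :=
  r s a + γ * ∑ s', P s a s' * V s'

theorem softBellman_eq_backup (α : S → ℝ) (Q : S → A → ℝ) :
    softBellman r γ P α Q = backup r γ P fun s => softMax (α s) (Q s) :=
  rfl

theorem hardBellman_eq_backup [Nonempty A] (Q : S → A → ℝ) :
    hardBellman r γ P Q = backup r γ P fun s => univ.sup' univ_nonempty (Q s) :=
  rfl

variable [Nonempty S] [Nonempty A]

theorem supNorm_backup_sub_backup_le (hP : ∀ s a s', 0 ≤ P s a s')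
    (hP1 : ∀ s a, ∑ s', P s a s' = 1) (hγ : 0 ≤ γ) {V W : S → ℝ} {C : ℝ}
    (h : ∀ s, |V s - W s| ≤ C) :
    supNorm (fun s a => backup r γ P V s a - backup r γ P W s a) ≤ γ * C := by
  refine supNorm_le fun s a => ?_
  rw [backup, backup, add_sub_add_left_eq_sub, ← mul_sub, abs_mul, abs_of_nonneg hγ]
  exact mul_le_mul_of_nonneg_left (abs_sum_mul_sub_sum_mul_le (hP s a) (hP1 s a) h) hγ

theorem supNorm_softBellman_sub_softBellman_le (hP : ∀ s a s', 0 ≤ P s a s')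
    (hP1 : ∀ s a, ∑ s', P s a s' = 1) (hγ : 0 ≤ γ) {α : S → ℝ} (hα : ∀ s, 0 < α s)
    (Q Q' : S → A → ℝ) :
    supNorm (fun s a => softBellman r γ P α Q s a - softBellman r γ P α Q' s a) ≤
      γ * supNorm (fun s a => Q s a - Q' s a) := by
  rw [softBellman_eq_backup, softBellman_eq_backup]
  exact supNorm_backup_sub_backup_le hP hP1 hγ fun s =>
    abs_softMax_sub_softMax_le (hα s) fun a => abs_le_supNorm (fun s a => Q s a - Q' s a) s a

theorem supNorm_softBellman_sub_le_of_fixedPoint (hP : ∀ s a s', 0 ≤ P s a s')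
    (hP1 : ∀ s a, ∑ s', P s a s' = 1) (hγ : 0 ≤ γ) {α : S → ℝ} (hα : ∀ s, 0 < α s) {B : ℝ}
    (hB : ∀ s, α s ≤ B) {Qstar : S → A → ℝ} (hQstar : hardBellman r γ P Qstar = Qstar)
    (Q : S → A → ℝ) :
    supNorm (fun s a => softBellman r γ P α Q s a - Qstar s a) ≤
      γ * (supNorm (fun s a => Q s a - Qstar s a) + B * log (Fintype.card A)) := by
  have hlog : 0 ≤ log (Fintype.card A) := log_nonneg (Nat.one_le_cast.2 Fintype.card_pos)
  conv_lhs => rw [← hQstar, softBellman_eq_backup, hardBellman_eq_backup]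
  refine supNorm_backup_sub_backup_le hP hP1 hγ fun s => ?_
  calc _ ≤ supNorm (fun s a => Q s a - Qstar s a) + α s * log (Fintype.card A) :=
        abs_softMax_sub_sup'_le (hα s) fun a => abs_le_supNorm (fun s a => Q s a - Qstar s a) s a
    _ ≤ _ := by gcongr; exact hB s

end Bellman

theorem le_geom_add_of_le_mul_add {e : ℕ → ℝ} {γ c d : ℝ} (hγ0 : 0 ≤ γ) (hγ1 : γ ≠ 1)
    (h : ∀ t, e (t + 1) ≤ γ * e t + c + d * γ ^ (t + 1)) (t : ℕ) :
    e t ≤ γ ^ t * e 0 + c / (1 - γ) * (1 - γ ^ t) + d * t * γ ^ t := by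
  induction t with
  | zero => simp
  | succ n ih =>
    have hγ1' : 1 - γ ≠ 0 := sub_ne_zero.2 hγ1.symm
    calc e (n + 1) ≤ γ * e n + c + d * γ ^ (n + 1) := h n
      _ ≤ γ * (γ ^ n * e 0 + c / (1 - γ) * (1 - γ ^ n) + d * n * γ ^ n) + c + d * γ ^ (n + 1) := by
        gcongr
      _ = _ := by
        field_simp
        push_cast
        ring

/-- Convergence under disagreement-scaled temperature: for coupled iterates
`Q_{t+1}⁽ⁱ⁾ = T_{α_t} Q_t⁽ⁱ⁾` with
`α_t(s) = max{α_min, (max_a |Q_t¹(s,a) − Q_t²(s,a)|)/κ}` and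
`Δ_0 = ‖Q_0¹ − Q_0²‖∞`, one has
`‖Q_t⁽ⁱ⁾ − Q*‖∞ ≤ γ^t·‖Q_0⁽ⁱ⁾ − Q*‖∞ + (γ·α_min·log|A|/(1−γ))·(1 − γ^t)
  + (Δ_0·log|A|/κ)·t·γ^t`. -/
theorem convergence_disagreement_temperature {S A : Type*}
    [Fintype S] [Fintype A] [Nonempty S] [Nonempty A]
    (r : S → A → ℝ) (γ : ℝ) (hγ0 : 0 < γ) (hγ1 : γ < 1)
    (P : S → A → S → ℝ) (hP : ∀ s a s', 0 ≤ P s a s')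
    (hP1 : ∀ s a, ∑ s', P s a s' = 1)
    (κ αmin : ℝ) (hκ : 0 < κ) (hαmin : 0 < αmin)
    (Qstar : S → A → ℝ) (hQstar : hardBellman r γ P Qstar = Qstar)
    (Q1 Q2 : ℕ → S → A → ℝ)
    (αseq : ℕ → S → ℝ)
    (hαseq : ∀ t s, αseq t s =
      max αmin ((Finset.univ.sup' Finset.univ_nonempty fun a => |Q1 t s a - Q2 t s a|) / κ))
    (hQ1 : ∀ t, Q1 (t + 1) = softBellman r γ P (αseq t) (Q1 t))
    (hQ2 : ∀ t, Q2 (t + 1) = softBellman r γ P (αseq t) (Q2 t)) :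
    ∀ (Qi : ℕ → S → A → ℝ), (Qi = Q1 ∨ Qi = Q2) → ∀ t,
      supNorm (fun s a => Qi t s a - Qstar s a) ≤
        γ ^ t * supNorm (fun s a => Qi 0 s a - Qstar s a) +
          (γ * αmin * Real.log (Fintype.card A) / (1 - γ)) * (1 - γ ^ t) +
          (supNorm (fun s a => Q1 0 s a - Q2 0 s a) * Real.log (Fintype.card A) / κ) *
            t * γ ^ t := by
  intro Qi hQi t
  have hα (t : ℕ) (s : S) : 0 < αseq t s := (hαseq t s).symm ▸ lt_max_of_lt_left hαmin
  have hQi_succ (t : ℕ) : Qi (t + 1) = softBellman r γ P (αseq t) (Qi t) := by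
    rcases hQi with rfl | rfl
    exacts [hQ1 t, hQ2 t]
  set Δ : ℕ → ℝ := fun t => supNorm fun s a => Q1 t s a - Q2 t s a
  have hΔ (t : ℕ) : Δ t ≤ γ ^ t * Δ 0 := le_geom hγ0.le t fun k _ => by
    simpa only [Δ, hQ1, hQ2] using
      supNorm_softBellman_sub_softBellman_le hP hP1 hγ0.le (hα k) (Q1 k) (Q2 k)
  have hαseq_le (t : ℕ) (s : S) : αseq t s ≤ αmin + γ ^ t * Δ 0 / κ := by
    have hΔt : 0 ≤ Δ t / κ := div_nonneg (supNorm_nonneg _) hκ.le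
    have hsup : _ ≤ Δ t := sup'_abs_le_supNorm (fun s a => Q1 t s a - Q2 t s a) s
    rw [hαseq]
    calc _ ≤ αmin + Δ t / κ :=
          max_le (by linarith) (by linarith [div_le_div_of_nonneg_right hsup hκ.le])
      _ ≤ _ := by gcongr; exact hΔ t
  refine le_geom_add_of_le_mul_add (e := fun t => supNorm fun s a => Qi t s a - Qstar s a)
    hγ0.le hγ1.ne (fun t => ?_) t
  calc supNorm (fun s a => Qi (t + 1) s a - Qstar s a)
      ≤ γ * (supNorm (fun s a => Qi t s a - Qstar s a) +
          (αmin + γ ^ t * Δ 0 / κ) * log (Fintype.card A)) := by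
        rw [hQi_succ]
        exact supNorm_softBellman_sub_le_of_fixedPoint hP hP1 hγ0.le (hα t) (hαseq_le t) hQstar _
    _ = _ := by ring
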